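/- arXiv:1203.2300 — 2 statements merged into one kernel-verified Lean document; each statement's English description precedes it below -/
import Mathlib

section
/- Let G be a group, Z an abelian group (written additively), and let c, c' : G × G → Z be two 2-cocycles, i.e. c(g₁,g₂) + c(g₁g₂,g₃) = c(g₁,g₂g₃) + c(g₂,g₃) for all g₁,g₂,g₃ ∈ G, and similarly для c'. Let B ⊆ G be a big subset and suppose that c(b₁,b₂) = c'(b₁,b₂) for all b₁, b₂ ∈ B with b₁b₂ ∈ B. Then there exists a unique function θ : G → Z such that θ(b) = 0 for all b ∈ B and θ(g₁) + θ(g₂) + c'(g₁,g₂) = θ(g₁g₂) + c(g₁,g₂) for all g₁, g₂ ∈ G. (Equivalently: the map (z,g) ↦ (z + θ(g), g) is the unique isomorphism between the central extensions Z × G with products (z₁,g₁)(z₂,g₂) = (z₁+z₂+c(g₁,g₂), g₁g₂) and (z₁,g₁)(z₂,g₂) = (z₁+z₂+c'(g₁,g₂), g₁g₂) that is identical on Z and sends (0,b) to (0,b) for each b ∈ B.) -/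
/-!
With `d := c' - c`, a function `θ` as in the statement is exactly a multiplicative section
`g ↦ (θ g, g)` of the central extension `Z × G` twisted by `d`, and vanishing on `B` means
extending the map `b ↦ (0, b)`, which is multiplicative on `B` because `d` vanishes there.
Over a big set `B` every such partial homomorphism into a semigroup extends uniquely: `B * B = G`,
and `F (p * q) := f p * f q` is well defined because for `x ∈ B⁻¹ ∩ Bp⁻¹ ∩ Br⁻¹ ∩ B(pq)⁻¹`
both `f p * f q` and `f r * f s` equal `f x⁻¹ * f (x * p * q)` whenever `p * q = r * s`.
-/

open Pointwise

/-- A subset `B` of a group `G` is *big* if for any `g₁ g₂ g₃ ∈ G` one has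
`B⁻¹ ∩ Bg₁ ∩ Bg₂ ∩ Bg₃ ≠ ∅`. -/
def IsBig {G : Type*} [Group G] (B : Set G) : Prop :=
  ∀ g₁ g₂ g₃ : G, (B⁻¹ ∩ (B * {g₁}) ∩ (B * {g₂}) ∩ (B * {g₃})).Nonempty

namespace IsBig

variable {G H : Type*} [Group G] {B : Set G}

theorem exists_inv_mem_mul_mem (hB : IsBig B) (g₁ g₂ g₃ : G) :
    ∃ x, x⁻¹ ∈ B ∧ x * g₁ ∈ B ∧ x * g₂ ∈ B ∧ x * g₃ ∈ B := by
  have mul_mem : ∀ {x g : G}, x ∈ B * {g⁻¹} → x * g ∈ B := by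
    rintro x g ⟨b, hb, _, rfl, rfl⟩
    simpa using hb
  obtain ⟨x, ⟨⟨hx, h₁⟩, h₂⟩, h₃⟩ := hB g₁⁻¹ g₂⁻¹ g₃⁻¹
  exact ⟨x, hx, mul_mem h₁, mul_mem h₂, mul_mem h₃⟩

theorem exists_mul_eq (hB : IsBig B) (g : G) : ∃ p ∈ B, ∃ q ∈ B, p * q = g := by
  obtain ⟨x, hx, hxg, -⟩ := hB.exists_inv_mem_mul_mem g g g
  exact ⟨x⁻¹, hx, x * g, hxg, inv_mul_cancel_left x g⟩

theorem eq_of_map_mul_of_eqOn [Mul H] (hB : IsBig B) {F F' : G → H}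
    (hF : ∀ g₁ g₂, F (g₁ * g₂) = F g₁ * F g₂) (hF' : ∀ g₁ g₂, F' (g₁ * g₂) = F' g₁ * F' g₂)
    (h : Set.EqOn F F' B) : F = F' := by
  funext g
  obtain ⟨p, hp, q, hq, rfl⟩ := hB.exists_mul_eq g
  rw [hF, hF', h hp, h hq]

variable [Semigroup H] {f : G → H}

theorem mul_eq_mul_of_mul_eq (hB : IsBig B)
    (hf : ∀ b₁ ∈ B, ∀ b₂ ∈ B, b₁ * b₂ ∈ B → f (b₁ * b₂) = f b₁ * f b₂)
    {p q r s : G} (hp : p ∈ B) (hq : q ∈ B) (hr : r ∈ B) (hs : s ∈ B) (h : p * q = r * s) :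
    f p * f q = f r * f s := by
  obtain ⟨x, hx, hxp, hxr, hxpq⟩ := hB.exists_inv_mem_mul_mem p r (p * q)
  have key : ∀ a ∈ B, ∀ b ∈ B, x * a ∈ B → a * b = p * q →
      f a * f b = f x⁻¹ * f (x * (p * q)) := by
    intro a ha b hb hxa hab
    have hxab : x * a * b ∈ B := by rwa [mul_assoc, hab]
    calc f a * f b = f x⁻¹ * f (x * a) * f b := by
          rw [← hf _ hx _ hxa (by rwa [inv_mul_cancel_left]), inv_mul_cancel_left]
      _ = f x⁻¹ * f (x * (p * q)) := by rw [mul_assoc, ← hf _ hxa _ hb hxab, mul_assoc, hab]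
  rw [key p hp q hq hxp rfl, key r hr s hs hxr h.symm]

theorem exists_map_mul_eq_mul (hB : IsBig B)
    (hf : ∀ b₁ ∈ B, ∀ b₂ ∈ B, b₁ * b₂ ∈ B → f (b₁ * b₂) = f b₁ * f b₂) :
    ∃ F : G → H, ∀ p ∈ B, ∀ q ∈ B, F (p * q) = f p * f q := by
  choose p hp q hq hpq using hB.exists_mul_eq
  exact ⟨fun g => f (p g) * f (q g),
    fun a ha b hb => hB.mul_eq_mul_of_mul_eq hf (hp _) (hq _) ha hb (hpq _)⟩

theorem eqOn_of_map_mul_eq_mul (hB : IsBig B)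
    (hf : ∀ b₁ ∈ B, ∀ b₂ ∈ B, b₁ * b₂ ∈ B → f (b₁ * b₂) = f b₁ * f b₂)
    {F : G → H} (hF : ∀ p ∈ B, ∀ q ∈ B, F (p * q) = f p * f q) : Set.EqOn F f B := by
  intro b hb
  obtain ⟨x, hx, hxb, -⟩ := hB.exists_inv_mem_mul_mem b b b
  calc F b = F (x⁻¹ * (x * b)) := by rw [inv_mul_cancel_left]
    _ = f (x⁻¹ * (x * b)) := by
      rw [hF _ hx _ hxb, hf _ hx _ hxb (by rwa [inv_mul_cancel_left])]
    _ = f b := by rw [inv_mul_cancel_left]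

theorem map_mul_of_map_mul_eq_mul (hB : IsBig B)
    (hf : ∀ b₁ ∈ B, ∀ b₂ ∈ B, b₁ * b₂ ∈ B → f (b₁ * b₂) = f b₁ * f b₂)
    {F : G → H} (hF : ∀ p ∈ B, ∀ q ∈ B, F (p * q) = f p * f q) (g₁ g₂ : G) :
    F (g₁ * g₂) = F g₁ * F g₂ := by
  have mul_right : ∀ g, ∀ b ∈ B, F (g * b) = F g * f b := by
    intro g b hb
    obtain ⟨x, hx, hxg, hxgb, -⟩ := hB.exists_inv_mem_mul_mem g (g * b) (g * b)
    calc F (g * b) = F (x⁻¹ * (x * (g * b))) := by rw [inv_mul_cancel_left]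
      _ = f x⁻¹ * (f (x * g) * f b) := by
        rw [hF _ hx _ hxgb, ← mul_assoc x g b, hf _ hxg _ hb (by rwa [mul_assoc])]
      _ = F g * f b := by rw [← mul_assoc, ← hF _ hx _ hxg, inv_mul_cancel_left]
  obtain ⟨r, hr, s, hs, rfl⟩ := hB.exists_mul_eq g₂
  rw [← mul_assoc, mul_right _ _ hs, mul_right _ _ hr, hF _ hr _ hs, mul_assoc]

theorem existsUnique_map_mul_eqOn (hB : IsBig B)
    (hf : ∀ b₁ ∈ B, ∀ b₂ ∈ B, b₁ * b₂ ∈ B → f (b₁ * b₂) = f b₁ * f b₂) :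
    ∃! F : G → H, Set.EqOn F f B ∧ ∀ g₁ g₂, F (g₁ * g₂) = F g₁ * F g₂ := by
  obtain ⟨F, hF⟩ := hB.exists_map_mul_eq_mul hf
  have hFB := hB.eqOn_of_map_mul_eq_mul hf hF
  have hFmul := hB.map_mul_of_map_mul_eq_mul hf hF
  exact ⟨F, ⟨hFB, hFmul⟩, fun F' ⟨hF'B, hF'mul⟩ =>
    hB.eq_of_map_mul_of_eqOn hF'mul hFmul (hF'B.trans hFB.symm)⟩

end IsBig

section Cocycle

variable {G Z : Type*} [Group G] [AddCommGroup Z]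

def IsAddTwoCocycle (d : G → G → Z) : Prop :=
  ∀ g₁ g₂ g₃ : G, d g₁ g₂ + d (g₁ * g₂) g₃ = d g₁ (g₂ * g₃) + d g₂ g₃

theorem IsAddTwoCocycle.sub {c c' : G → G → Z} (hc : IsAddTwoCocycle c)
    (hc' : IsAddTwoCocycle c') : IsAddTwoCocycle (c - c') := by
  intro g₁ g₂ g₃
  simp only [Pi.sub_apply]
  rw [sub_add_sub_comm, sub_add_sub_comm, hc, hc']

/-- The central extension of `G` by `Z` with cocycle `d`, as a semigroup: the cocycle identity is
exactly its associativity. -/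
abbrev IsAddTwoCocycle.semigroup {d : G → G → Z} (hd : IsAddTwoCocycle d) :
    Semigroup (Z × G) where
  mul x y := (x.1 + y.1 + d x.2 y.2, x.2 * y.2)
  mul_assoc x y z := by
    refine Prod.ext ?_ (mul_assoc x.2 y.2 z.2)
    change x.1 + y.1 + d x.2 y.2 + z.1 + d (x.2 * y.2) z.2
      = x.1 + (y.1 + z.1 + d y.2 z.2) + d x.2 (y.2 * z.2)
    calc _ = x.1 + y.1 + z.1 + (d x.2 y.2 + d (x.2 * y.2) z.2) := by abel
      _ = x.1 + y.1 + z.1 + (d x.2 (y.2 * z.2) + d y.2 z.2) := by rw [hd]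
      _ = _ := by abel

theorem IsAddTwoCocycle.existsUnique_splitting_of_isBig {d : G → G → Z}
    (hd : IsAddTwoCocycle d) {B : Set G} (hB : IsBig B)
    (hdB : ∀ b₁ ∈ B, ∀ b₂ ∈ B, b₁ * b₂ ∈ B → d b₁ b₂ = 0) :
    ∃! θ : G → Z, (∀ b ∈ B, θ b = 0) ∧ ∀ g₁ g₂, θ g₁ + θ g₂ + d g₁ g₂ = θ (g₁ * g₂) := by
  let _ := hd.semigroup
  have mk_mul_mk : ∀ (z₁ z₂ : Z) (g₁ g₂ : G),
      ((z₁, g₁) * (z₂, g₂) : Z × G) = (z₁ + z₂ + d g₁ g₂, g₁ * g₂) := fun _ _ _ _ => rfl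
  obtain ⟨F, ⟨hFB, hFmul⟩, hFuniq⟩ := hB.existsUnique_map_mul_eqOn (f := fun g => ((0 : Z), g))
    fun b₁ h₁ b₂ h₂ h => by rw [mk_mul_mk, hdB b₁ h₁ b₂ h₂ h, add_zero, add_zero]
  have hFsnd : (fun g => (F g).2) = id := hB.eq_of_map_mul_of_eqOn
    (fun g₁ g₂ => congrArg Prod.snd (hFmul g₁ g₂)) (fun _ _ => rfl)
    (fun b hb => congrArg Prod.snd (hFB hb))
  have hF : ∀ g, F g = ((F g).1, g) := fun g => Prod.ext rfl (congrFun hFsnd g)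
  refine ⟨fun g => (F g).1, ⟨fun b hb => congrArg Prod.fst (hFB hb), fun g₁ g₂ => ?_⟩,
    fun θ ⟨hθB, hθ⟩ => ?_⟩
  · have h := hFmul g₁ g₂
    rw [hF g₁, hF g₂, mk_mul_mk] at h
    exact (congrArg Prod.fst h).symm
  · have h := hFuniq (fun g => (θ g, g))
      ⟨fun b hb => Prod.ext (hθB b hb) rfl, fun g₁ g₂ => by rw [mk_mul_mk, hθ]⟩
    exact funext fun g => congrArg Prod.fst (congrFun h g)

end Cocycle

/-- Lemma `big-lem`(ii) of the paper: two 2-cocycles agreeing on a big subset `B`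
(whenever the product stays in `B`) differ by a unique coboundary vanishing on `B`;
equivalently, the corresponding central extensions of `G` by `Z` are isomorphic by a
unique isomorphism identical on `Z` and matching the canonical sections over `B`. -/
theorem cocycles_agreeing_on_big_subset {G : Type*} [Group G] {Z : Type*} [AddCommGroup Z]
    (c c' : G → G → Z)
    (hc : ∀ g₁ g₂ g₃ : G, c g₁ g₂ + c (g₁ * g₂) g₃ = c g₁ (g₂ * g₃) + c g₂ g₃)
    (hc' : ∀ g₁ g₂ g₃ : G, c' g₁ g₂ + c' (g₁ * g₂) g₃ = c' g₁ (g₂ * g₃) + c' g₂ g₃)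
    (B : Set G) (hB : IsBig B)
    (hagree : ∀ b₁ b₂ : G, b₁ ∈ B → b₂ ∈ B → b₁ * b₂ ∈ B → c b₁ b₂ = c' b₁ b₂) :
    ∃! θ : G → Z, (∀ b ∈ B, θ b = 0) ∧
      ∀ g₁ g₂ : G, θ g₁ + θ g₂ + c' g₁ g₂ = θ (g₁ * g₂) + c g₁ g₂ := by
  have hsplit := IsAddTwoCocycle.existsUnique_splitting_of_isBig (IsAddTwoCocycle.sub hc' hc) hB
    fun b₁ h₁ b₂ h₂ h => sub_eq_zero.2 (hagree b₁ b₂ h₁ h₂ h).symm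
  refine (existsUnique_congr fun θ => and_congr_right' (forall₂_congr fun g₁ g₂ => ?_)).1 hsplit
  rw [Pi.sub_apply, Pi.sub_apply, ← add_sub_assoc, sub_eq_iff_eq_add]
end

section
/- Let A and B be symmetric n×n matrices with complex entries (Aᵀ = A and Bᵀ = B). If det(A − S) = det(B − S) for every symmetric n×n complex matrix S (Sᵀ = S), then A = B. -/
/-!
Put `D = A - B`. The hypothesis says `det (T + D) = det T` for every symmetric `T`, hence, by
homogeneity of `det`, `det (T + u • D) = det T` for every scalar `u`. At an invertible symmetric
`T = Q⁻¹` the linear coefficient in `u` is `trace (Q * D)`, so `trace (Q * D) = 0`; since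
`Q + t • 1` is invertible for all but finitely many `t`, this extends to every symmetric `Q`.
Taking `Q = Dᴴ` gives `trace (Dᴴ * D) = 0`, i.e. `D = 0`.
-/

open Polynomial

namespace Matrix

variable {n : Type*} [Fintype n] [DecidableEq n]

theorem trace_eq_zero_of_forall_det_one_add_smul_eq_one {R : Type*} [CommRing R] [IsDomain R]
    [Infinite R] (N : Matrix n n R) (h : ∀ u : R, det (1 + u • N) = 1) : trace N = 0 := by
  have hpoly : det (1 + (X : R[X]) • N.map C) = 1 := by
    refine Polynomial.funext fun u => ?_
    rw [← coe_evalRingHom, RingHom.map_det, map_one, ← h u]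
    congr 1
    ext i j
    simp [one_apply, apply_ite (eval u), mul_comm u]
  simpa [hpoly, coeff_one] using (coeff_det_one_add_X_smul_one N).symm

theorem trace_inv_mul_eq_zero_of_forall_det_add_smul {R : Type*} [CommRing R] [IsDomain R]
    [Infinite R] {P : Matrix n n R} (D : Matrix n n R) (hP : IsUnit P.det)
    (h : ∀ u : R, det (P + u • D) = det P) : trace (P⁻¹ * D) = 0 := by
  refine trace_eq_zero_of_forall_det_one_add_smul_eq_one _ fun u => ?_
  refine mul_left_cancel₀ hP.ne_zero ?_
  rw [← det_mul, mul_add, mul_one, Matrix.mul_smul, ← Matrix.mul_assoc, mul_nonsing_inv P hP,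
    Matrix.one_mul, h u, mul_one]

theorem det_add_smul_of_forall_isSymm_det_add {K : Type*} [Field K] {D : Matrix n n K}
    (hD : ∀ T : Matrix n n K, T.IsSymm → det (T + D) = det T) (u : K) {T : Matrix n n K}
    (hT : T.IsSymm) : det (T + u • D) = det T := by
  rcases eq_or_ne u 0 with rfl | hu
  · simp
  have hscale : T + u • D = u • (u⁻¹ • T + D) := by
    rw [smul_add, smul_smul, mul_inv_cancel₀ hu, one_smul]
  rw [hscale, det_smul, hD _ (hT.smul u⁻¹), ← det_smul, smul_smul, mul_inv_cancel₀ hu, one_smul]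

theorem map_eq_zero_of_isSymm_of_forall_det_ne_zero {K : Type*} [Field K] [Infinite K]
    (f : Matrix n n K →ₗ[K] K) (hf : ∀ Q : Matrix n n K, Q.IsSymm → Q.det ≠ 0 → f Q = 0)
    {Q : Matrix n n K} (hQ : Q.IsSymm) : f Q = 0 := by
  have hprod : (C (f Q) + C (f 1) * X) * (-Q).charpoly = 0 := by
    refine Polynomial.funext fun t => ?_
    rw [eval_mul, eval_zero, mul_eq_zero, or_iff_not_imp_right, eval_charpoly, scalar_apply,
      ← smul_one_eq_diagonal, sub_neg_eq_add, add_comm]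
    intro ht
    simpa [mul_comm t] using hf _ (hQ.add (isSymm_one.smul t)) ht
  have hlin := (mul_eq_zero.mp hprod).resolve_right (charpoly_monic _).ne_zero
  simpa using congr_arg (coeff · 0) hlin

end Matrix

open Matrix ComplexOrder in
/-- The second assertion of Proposition `deg-inj-prop` in the matrix-algebra setting:
a symmetric complex `n × n` matrix `A` is determined by the polynomial function
`S ↦ det(A − S)` restricted to symmetric matrices. -/
theorem symm_matrix_determined_by_det_sub_symm
    (n : ℕ) (A B : Matrix (Fin n) (Fin n) ℂ)
    (hA : A.IsSymm) (hB : B.IsSymm)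
    (h : ∀ S : Matrix (Fin n) (Fin n) ℂ, S.IsSymm → (A - S).det = (B - S).det) :
    A = B := by
  set D := A - B
  have hD : D.IsSymm := hA.sub hB
  have hdet : ∀ T : Matrix (Fin n) (Fin n) ℂ, T.IsSymm → det (T + D) = det T := fun T hT => by
    have hsub : A - (B - T) = T + D := by simp only [D]; abel
    simpa [hsub] using h (B - T) (hB.sub hT)
  have htrace_of_det_ne_zero : ∀ P : Matrix (Fin n) (Fin n) ℂ, P.IsSymm → P.det ≠ 0 →
      trace (P * D) = 0 := fun P hP hPdet => by
    have hPunit : IsUnit P.det := isUnit_iff_ne_zero.mpr hPdet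
    simpa [nonsing_inv_nonsing_inv P hPunit] using
      trace_inv_mul_eq_zero_of_forall_det_add_smul D (isUnit_nonsing_inv_det P hPunit)
        fun u => det_add_smul_of_forall_isSymm_det_add hdet u hP.inv
  have htrace : ∀ Q : Matrix (Fin n) (Fin n) ℂ, Q.IsSymm → trace (Q * D) = 0 := fun Q =>
    map_eq_zero_of_isSymm_of_forall_det_ne_zero
      ((traceLinearMap _ ℂ ℂ).comp (LinearMap.mulRight ℂ D)) htrace_of_det_ne_zero
  exact sub_eq_zero.mp <| trace_conjTranspose_mul_self_eq_zero_iff.mp (htrace _ hD.conjTranspose)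
end
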